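/- Let n ≥ p ≥ 1, let F : ℝ^{n×p} → ℝ be twice continuously differentiable, let X ∈ ℝ^{n×p} satisfy XᵀX = I_p, and let Q ∈ ℝ^{n×n} be orthogonal with first p columns equal to X. Let Λ = {Q(E_{ij} − E_{ji}) : 1 ≤ i < j ≤ p} ∪ {Q E_{ij} : p < i ≤ n, 1 ≤ j ≤ p}, and let G ∈ ℝ^{n×p} have entries G_{ij} = ∂_{ij}F(X). Then ∑_{U ∈ Λ} [ D²F(X)[U,U] + tr(Gᵀ U Xᵀ U) − (1/2) tr((XᵀG + GᵀX) Uᵀ (I_n − X Xᵀ) U) ] = ∑_{i=1}^{n} ∑_{j=1}^{p} ∂²_{ij}F(X) − ∑_{i,u=1}^{n} ∑_{j,v=1}^{p} X_{iv} X_{uj} ∂_{ij}∂_{uv}F(X) − (n−1) ∑_{i=1}^{n} ∑_{j=1}^{p} X_{ij} ∂_{ij}F(X). -/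

import Mathlib

open Matrix

attribute [local instance] Matrix.normedAddCommGroup Matrix.normedSpace

/-- Basis element `Q(E_{ij} - E_{ji})` for `i < j ≤ p`. -/
def stiefelBasis₁ {n p : ℕ} (hpn : p ≤ n) (Q : Matrix (Fin n) (Fin n) ℝ)
    (i j : Fin p) : Matrix (Fin n) (Fin p) ℝ :=
  Q * (Matrix.single (Fin.castLE hpn i) j (1 : ℝ)
    - Matrix.single (Fin.castLE hpn j) i (1 : ℝ))

/-- Basis element `Q E_{ij}` for `i > p`. -/
def stiefelBasis₂ {n p : ℕ} (Q : Matrix (Fin n) (Fin n) ℝ)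
    (i : Fin n) (j : Fin p) : Matrix (Fin n) (Fin p) ℝ :=
  Q * Matrix.single i j (1 : ℝ)

/-- The Riemannian Hessian of `F` at `X` (canonical metric, Edelman–Arias–Smith
formula) evaluated on the tangent vector `U`, where `G` is the matrix of Euclidean
partial derivatives of `F` at `X`. -/
noncomputable def riemannianHessianQF {n p : ℕ}
    (F : Matrix (Fin n) (Fin p) ℝ → ℝ) (X G U : Matrix (Fin n) (Fin p) ℝ) : ℝ :=
  iteratedFDeriv ℝ 2 F X ![U, U]
    + Matrix.trace (Gᵀ * U * Xᵀ * U)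
    - (1/2 : ℝ) * Matrix.trace ((Xᵀ * G + Gᵀ * X) * Uᵀ
        * ((1 : Matrix (Fin n) (Fin n) ℝ) - X * Xᵀ) * U)

/-!
The frame `Λ` satisfies `∑_{U ∈ Λ} U_{ij} U_{uv} = δ_{iu} δ_{jv} - X_{iv} X_{uj}`: the skew elements
`X (E_{kl} - E_{lk})` contribute `δ_{jv} (X Xᵀ)_{iu} - X_{iv} X_{uj}`, and the elements `Q E_{kl}`
with `k ≥ p` contribute `δ_{jv} (I - X Xᵀ)_{iu}`, since the remaining columns of `Q` span the
orthogonal complement of the columns of `X`. Every summand of the left-hand side is a quadratic form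
in `U`, so its sum over `Λ` is the contraction of that kernel with the corresponding bilinear form.
For `D²F(X)` this contraction is exactly the first two terms on the right; for the two trace terms
it gives `(1 - p) tr(X Gᵀ)` and `-(n - p) tr(X Gᵀ)`, using `Xᵀ X = I`.
-/

theorem Fin.sum_univ_eq_sum_castLE_add {M : Type*} [AddCommMonoid M] {n p : ℕ} (hpn : p ≤ n)
    (f : Fin n → M) :
    ∑ k, f k = ∑ k : Fin p, f (Fin.castLE hpn k) + ∑ k : Fin n, if p ≤ (k : ℕ) then f k else 0 := by
  obtain ⟨m, rfl⟩ := Nat.exists_eq_add_of_le hpn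
  have hlt (k : Fin p) : ¬p ≤ (k : ℕ) := not_le.mpr k.isLt
  simp [Fin.sum_univ_add, hlt]
  rfl

theorem Finset.two_mul_sum_sum_ite_lt {R ι : Type*} [CommRing R] [Fintype ι] [LinearOrder ι]
    (h : ι → ι → R) (h_symm : ∀ k l, h k l = h l k) (h_diag : ∀ k, h k k = 0) :
    2 * ∑ k, ∑ l, (if k < l then h k l else 0) = ∑ k, ∑ l, h k l := by
  have hsplit (k l : ι) : h k l = (if k < l then h k l else 0) + (if l < k then h l k else 0) := by
    rcases lt_trichotomy k l with hkl | rfl | hkl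
    · simp [hkl, hkl.not_gt]
    · simp [h_diag]
    · simp [hkl, hkl.not_gt, h_symm k l]
  rw [Finset.sum_congr rfl fun k _ => Finset.sum_congr rfl fun l _ => hsplit k l,
    Finset.sum_congr rfl fun k _ => Finset.sum_add_distrib, Finset.sum_add_distrib,
    Finset.sum_comm (f := fun k l => if l < k then h l k else 0)]
  ring

section BilinearCoordinates

variable {R m r : Type*} [CommSemiring R] [Fintype m] [Fintype r] [DecidableEq m] [DecidableEq r]

theorem Matrix.eq_sum_smul_single (U : Matrix m r R) : U = ∑ i, ∑ j, U i j • single i j 1 := by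
  simpa using U.matrix_eq_sum_single

theorem LinearMap.BilinForm.apply_eq_sum_single (β : LinearMap.BilinForm R (Matrix m r R))
    (U V : Matrix m r R) :
    β U V = ∑ i, ∑ j, ∑ u, ∑ v, U i j * V u v * β (Matrix.single i j 1) (Matrix.single u v 1) := by
  conv_lhs => rw [U.eq_sum_smul_single]
  simp only [map_sum, map_smul, LinearMap.sum_apply, LinearMap.smul_apply, smul_eq_mul]
  conv_lhs => rw [V.eq_sum_smul_single]
  simp only [map_sum, map_smul, smul_eq_mul, Finset.mul_sum, mul_assoc]

theorem LinearMap.map_bilin_diag_eq_sum (L : (Matrix m r R → R) →ₗ[R] R)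
    (β : LinearMap.BilinForm R (Matrix m r R)) :
    L (fun U => β U U) = ∑ i, ∑ u, ∑ j, ∑ v,
      L (fun U => U i j * U u v) * β (Matrix.single i j 1) (Matrix.single u v 1) := by
  have hexp : (fun U => β U U) = ∑ i, ∑ u, ∑ j, ∑ v,
      β (Matrix.single i j 1) (Matrix.single u v 1) • fun U : Matrix m r R => U i j * U u v := by
    funext U
    rw [β.apply_eq_sum_single]
    simp only [Finset.sum_apply, Pi.smul_apply, smul_eq_mul]
    refine Finset.sum_congr rfl fun i _ => ?_
    rw [Finset.sum_comm]
    exact Finset.sum_congr rfl fun u _ => Finset.sum_congr rfl fun j _ =>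
      Finset.sum_congr rfl fun v _ => by ring
  rw [hexp]
  simp only [map_sum, map_smul, smul_eq_mul, mul_comm]

end BilinearCoordinates

section StiefelFrame

variable {n p : ℕ}

theorem stiefelBasis₁_apply (hpn : p ≤ n) {Q : Matrix (Fin n) (Fin n) ℝ}
    {X : Matrix (Fin n) (Fin p) ℝ} (hQX : ∀ (i : Fin n) (j : Fin p), Q i (Fin.castLE hpn j) = X i j)
    (k l : Fin p) (a : Fin n) (b : Fin p) :
    stiefelBasis₁ hpn Q k l a b = (if b = l then X a k else 0) - if b = k then X a l else 0 := by
  simp [stiefelBasis₁, mul_apply, single, mul_sub, Finset.sum_sub_distrib, ite_and, hQX,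
    @eq_comm _ l b, @eq_comm _ k b]

theorem stiefelBasis₂_apply (Q : Matrix (Fin n) (Fin n) ℝ) (k : Fin n) (l : Fin p) (a : Fin n)
    (b : Fin p) :
    stiefelBasis₂ Q k l a b = if b = l then Q a k else 0 := by
  simp [stiefelBasis₂, mul_apply, single, ite_and, @eq_comm _ l b]

theorem sum_stiefelBasis₁_apply_mul_apply (hpn : p ≤ n) {Q : Matrix (Fin n) (Fin n) ℝ}
    {X : Matrix (Fin n) (Fin p) ℝ} (hQX : ∀ (i : Fin n) (j : Fin p), Q i (Fin.castLE hpn j) = X i j)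
    (i u : Fin n) (j v : Fin p) :
    (∑ k : Fin p, ∑ l : Fin p,
        if k < l then stiefelBasis₁ hpn Q k l i j * stiefelBasis₁ hpn Q k l u v else 0)
      = (if j = v then (X * Xᵀ) i u else 0) - X i v * X u j := by
  refine mul_left_cancel₀ two_ne_zero ?_
  rw [Finset.two_mul_sum_sum_ite_lt]
  · simp [stiefelBasis₁_apply hpn hQX, mul_apply, sub_mul, mul_sub, ite_mul, mul_ite,
      Finset.sum_sub_distrib]
    split_ifs <;> ring
  · intro k l
    simp only [stiefelBasis₁_apply hpn hQX]
    ring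
  · intro k
    simp only [stiefelBasis₁_apply hpn hQX]
    ring

theorem sum_stiefelBasis₂_apply_mul_apply (hpn : p ≤ n) {Q : Matrix (Fin n) (Fin n) ℝ}
    {X : Matrix (Fin n) (Fin p) ℝ} (hQ : Qᵀ * Q = 1)
    (hQX : ∀ (i : Fin n) (j : Fin p), Q i (Fin.castLE hpn j) = X i j) (i u : Fin n) (j v : Fin p) :
    (∑ k : Fin n, ∑ l : Fin p,
        if p ≤ (k : ℕ) then stiefelBasis₂ Q k l i j * stiefelBasis₂ Q k l u v else 0)
      = if j = v then (1 - X * Xᵀ : Matrix (Fin n) (Fin n) ℝ) i u else 0 := by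
  have hQQt : Q * Qᵀ = 1 := mul_eq_one_comm.mp hQ
  have hrows : ∑ k, Q i k * Q u k = if i = u then 1 else 0 := by
    simpa [mul_apply, one_apply] using congrFun₂ hQQt i u
  have hsplit := Fin.sum_univ_eq_sum_castLE_add hpn (fun k => Q i k * Q u k)
  simp only [hQX] at hsplit
  by_cases hjv : j = v <;> simp [stiefelBasis₂_apply, hjv, mul_apply, one_apply]
  linarith

/-- `φ ↦ ∑_{U ∈ Λ} φ U`. -/
noncomputable def stiefelFrameSum (hpn : p ≤ n) (Q : Matrix (Fin n) (Fin n) ℝ) :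
    (Matrix (Fin n) (Fin p) ℝ → ℝ) →ₗ[ℝ] ℝ where
  toFun φ := (∑ i : Fin p, ∑ j : Fin p, if i < j then φ (stiefelBasis₁ hpn Q i j) else 0)
    + ∑ i : Fin n, ∑ j : Fin p, if p ≤ (i : ℕ) then φ (stiefelBasis₂ Q i j) else 0
  map_add' φ ψ := by
    simp only [Pi.add_apply, ite_add_zero, Finset.sum_add_distrib]
    ring
  map_smul' c φ := by
    simp only [Pi.smul_apply, smul_eq_mul, RingHom.id_apply, mul_add, Finset.mul_sum, mul_ite,
      mul_zero]

theorem stiefelFrameSum_apply (hpn : p ≤ n) (Q : Matrix (Fin n) (Fin n) ℝ)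
    (φ : Matrix (Fin n) (Fin p) ℝ → ℝ) :
    stiefelFrameSum hpn Q φ
      = (∑ i : Fin p, ∑ j : Fin p, if i < j then φ (stiefelBasis₁ hpn Q i j) else 0)
        + ∑ i : Fin n, ∑ j : Fin p, if p ≤ (i : ℕ) then φ (stiefelBasis₂ Q i j) else 0 :=
  rfl

theorem stiefelFrameSum_apply_mul_apply (hpn : p ≤ n) {Q : Matrix (Fin n) (Fin n) ℝ}
    {X : Matrix (Fin n) (Fin p) ℝ} (hQ : Qᵀ * Q = 1)
    (hQX : ∀ (i : Fin n) (j : Fin p), Q i (Fin.castLE hpn j) = X i j) (i u : Fin n) (j v : Fin p) :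
    stiefelFrameSum hpn Q (fun U => U i j * U u v)
      = (if i = u ∧ j = v then 1 else 0) - X i v * X u j := by
  rw [stiefelFrameSum_apply, sum_stiefelBasis₁_apply_mul_apply hpn hQX,
    sum_stiefelBasis₂_apply_mul_apply hpn hQ hQX]
  by_cases hjv : j = v <;> simp [hjv, one_apply]

theorem stiefelFrameSum_bilin_diag (hpn : p ≤ n) {Q : Matrix (Fin n) (Fin n) ℝ}
    {X : Matrix (Fin n) (Fin p) ℝ} (hQ : Qᵀ * Q = 1)
    (hQX : ∀ (i : Fin n) (j : Fin p), Q i (Fin.castLE hpn j) = X i j)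
    (β : LinearMap.BilinForm ℝ (Matrix (Fin n) (Fin p) ℝ)) :
    stiefelFrameSum hpn Q (fun U => β U U)
      = ∑ i, ∑ j, β (single i j 1) (single i j 1)
        - ∑ i, ∑ u, ∑ j, ∑ v, X i v * X u j * β (single i j 1) (single u v 1) := by
  simp only [LinearMap.map_bilin_diag_eq_sum, stiefelFrameSum_apply_mul_apply hpn hQ hQX, sub_mul,
    Finset.sum_sub_distrib, ite_mul, one_mul, zero_mul]
  simp [ite_and, Finset.sum_ite_irrel]

theorem stiefelFrameSum_trace_mul_mul (hpn : p ≤ n) {Q : Matrix (Fin n) (Fin n) ℝ}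
    {X : Matrix (Fin n) (Fin p) ℝ} (hQ : Qᵀ * Q = 1)
    (hQX : ∀ (i : Fin n) (j : Fin p), Q i (Fin.castLE hpn j) = X i j)
    (A C : Matrix (Fin p) (Fin n) ℝ) :
    stiefelFrameSum hpn Q (fun U => trace (A * U * C * U))
      = trace (A * Cᵀ) - trace (X * A) * trace (X * C) := by
  let β : LinearMap.BilinForm ℝ (Matrix (Fin n) (Fin p) ℝ) :=
    LinearMap.mk₂ ℝ (fun U V => trace (A * U * C * V))
      (by intros; simp [Matrix.mul_add, Matrix.add_mul]) (by intros; simp)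
      (by intros; simp [Matrix.mul_add]) (by intros; simp)
  have hsingle (i : Fin n) (j : Fin p) (u : Fin n) (v : Fin p) :
      β (single i j 1) (single u v 1) = A v i * C j u := by
    simp only [β, LinearMap.mk₂_apply]
    rw [Matrix.mul_assoc A, Matrix.mul_assoc A, single_mul_mul_single, trace_mul_single]
    simp [mul_comm]
  refine (stiefelFrameSum_bilin_diag hpn hQ hQX β).trans ?_
  simp only [hsingle]
  congr 1
  · simp only [trace, diag, mul_apply, transpose_apply]
    exact Finset.sum_comm
  · simp only [trace, diag, mul_apply, Finset.sum_mul_sum]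
    refine Finset.sum_congr rfl fun i _ => Finset.sum_congr rfl fun u _ => ?_
    rw [Finset.sum_comm]
    exact Finset.sum_congr rfl fun v _ => Finset.sum_congr rfl fun j _ => by ring

theorem stiefelFrameSum_trace_mul_transpose_mul (hpn : p ≤ n) {Q : Matrix (Fin n) (Fin n) ℝ}
    {X : Matrix (Fin n) (Fin p) ℝ} (hQ : Qᵀ * Q = 1)
    (hQX : ∀ (i : Fin n) (j : Fin p), Q i (Fin.castLE hpn j) = X i j)
    (A : Matrix (Fin p) (Fin p) ℝ) (C : Matrix (Fin n) (Fin n) ℝ) :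
    stiefelFrameSum hpn Q (fun U => trace (A * Uᵀ * C * U))
      = trace A * trace C - trace (X * A * Xᵀ * Cᵀ) := by
  let β : LinearMap.BilinForm ℝ (Matrix (Fin n) (Fin p) ℝ) :=
    LinearMap.mk₂ ℝ (fun U V => trace (A * Uᵀ * C * V))
      (by intros; simp [Matrix.mul_add, Matrix.add_mul]) (by intros; simp)
      (by intros; simp [Matrix.mul_add]) (by intros; simp)
  have hsingle (i : Fin n) (j : Fin p) (u : Fin n) (v : Fin p) :
      β (single i j 1) (single u v 1) = A v j * C i u := by
    simp only [β, LinearMap.mk₂_apply, transpose_single]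
    rw [Matrix.mul_assoc A, Matrix.mul_assoc A, single_mul_mul_single, trace_mul_single]
    simp [mul_comm]
  refine (stiefelFrameSum_bilin_diag hpn hQ hQX β).trans ?_
  simp only [hsingle]
  congr 1
  · rw [trace, trace, Finset.sum_mul_sum]
    exact Finset.sum_comm
  · simp only [trace, diag, mul_apply, transpose_apply, Finset.sum_mul]
    congr! 4 with i _ u _ j _ v
    ring

theorem stiefelFrameSum_gradient_terms (hpn : p ≤ n) {Q : Matrix (Fin n) (Fin n) ℝ}
    {X : Matrix (Fin n) (Fin p) ℝ} (hX : Xᵀ * X = 1) (hQ : Qᵀ * Q = 1)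
    (hQX : ∀ (i : Fin n) (j : Fin p), Q i (Fin.castLE hpn j) = X i j)
    (G : Matrix (Fin n) (Fin p) ℝ) :
    stiefelFrameSum hpn Q (fun U => trace (Gᵀ * U * Xᵀ * U))
      - (1 / 2 : ℝ) * stiefelFrameSum hpn Q (fun U => trace ((Xᵀ * G + Gᵀ * X) * Uᵀ
          * ((1 : Matrix (Fin n) (Fin n) ℝ) - X * Xᵀ) * U))
      = -((n : ℝ) - 1) * trace (X * Gᵀ) := by
  have htrace_XXt : trace (X * Xᵀ) = p := by
    rw [trace_mul_comm, hX, trace_one, Fintype.card_fin]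
  have htrace_XtG : trace (Xᵀ * G) = trace (X * Gᵀ) := by
    rw [← trace_transpose_mul, transpose_transpose]
  have hvanish : X * (Xᵀ * G + Gᵀ * X) * Xᵀ * (1 - X * Xᵀ)ᵀ = 0 := by
    have hXXtX : Xᵀ * (X * Xᵀ) = Xᵀ := by rw [← Matrix.mul_assoc, hX, Matrix.one_mul]
    simp [transpose_sub, Matrix.mul_sub, Matrix.mul_assoc, hXXtX]
  rw [stiefelFrameSum_trace_mul_mul hpn hQ hQX, stiefelFrameSum_trace_mul_transpose_mul hpn hQ hQX,
    hvanish, transpose_transpose, trace_mul_comm Gᵀ, htrace_XXt, trace_add, htrace_XtG,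
    trace_mul_comm Gᵀ, trace_sub, htrace_XXt, trace_one, trace_zero, Fintype.card_fin]
  ring

end StiefelFrame

theorem laplace_beltrami_extrinsic_general (n p : ℕ) (hpn : p ≤ n)
    (F : Matrix (Fin n) (Fin p) ℝ → ℝ)
    (X : Matrix (Fin n) (Fin p) ℝ) (hX : Xᵀ * X = 1)
    (Q : Matrix (Fin n) (Fin n) ℝ) (hQ : Qᵀ * Q = 1)
    (hQX : ∀ (i : Fin n) (j : Fin p), Q i (Fin.castLE hpn j) = X i j)
    (G : Matrix (Fin n) (Fin p) ℝ)
    (hG : ∀ (i : Fin n) (j : Fin p),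
      G i j = fderiv ℝ F X (Matrix.single i j (1 : ℝ))) :
    (∑ i : Fin p, ∑ j : Fin p,
        if i < j then riemannianHessianQF F X G (stiefelBasis₁ hpn Q i j) else 0)
      + (∑ i : Fin n, ∑ j : Fin p,
        if p ≤ (i : ℕ) then riemannianHessianQF F X G (stiefelBasis₂ Q i j) else 0)
    = (∑ i : Fin n, ∑ j : Fin p,
          iteratedFDeriv ℝ 2 F X
            ![Matrix.single i j (1 : ℝ), Matrix.single i j (1 : ℝ)])
      - (∑ i : Fin n, ∑ u : Fin n, ∑ j : Fin p, ∑ v : Fin p,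
          X i v * X u j * iteratedFDeriv ℝ 2 F X
            ![Matrix.single i j (1 : ℝ), Matrix.single u v (1 : ℝ)])
      - ((n : ℝ) - 1) * ∑ i : Fin n, ∑ j : Fin p,
          X i j * fderiv ℝ F X (Matrix.single i j (1 : ℝ)) := by
  have hsplit : riemannianHessianQF F X G = (fun U => bilinearIteratedFDerivTwo ℝ F X U U)
      + ((fun U => trace (Gᵀ * U * Xᵀ * U)) - (1 / 2 : ℝ) • fun U : Matrix (Fin n) (Fin p) ℝ =>
          trace ((Xᵀ * G + Gᵀ * X) * Uᵀ * ((1 : Matrix (Fin n) (Fin n) ℝ) - X * Xᵀ) * U)) := by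
    funext U
    simp only [riemannianHessianQF, bilinearIteratedFDerivTwo_eq_iteratedFDeriv, Pi.add_apply,
      Pi.sub_apply, Pi.smul_apply, smul_eq_mul, add_sub_assoc]
  have hgrad : ∑ i : Fin n, ∑ j : Fin p, X i j * fderiv ℝ F X (single i j 1) = trace (X * Gᵀ) := by
    simp only [← hG, ← sum_hadamard_eq, hadamard_apply]
  rw [← stiefelFrameSum_apply, hsplit, map_add, stiefelFrameSum_bilin_diag hpn hQ hQX, map_sub,
    map_smul, smul_eq_mul, stiefelFrameSum_gradient_terms hpn hX hQ hQX, hgrad]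
  simp only [bilinearIteratedFDerivTwo_eq_iteratedFDeriv]
  ring

/-- summing the Riemannian Hessian over the orthonormal basis `Λ` of the
tangent space yields the extrinsic representation of the Laplace–Beltrami operator of
the canonical metric applied to `F` at `X`. -/
theorem laplace_beltrami_extrinsic (n p : ℕ) (hp : 1 ≤ p) (hpn : p ≤ n)
    (F : Matrix (Fin n) (Fin p) ℝ → ℝ) (hF : ContDiff ℝ 2 F)
    (X : Matrix (Fin n) (Fin p) ℝ) (hX : Xᵀ * X = 1)
    (Q : Matrix (Fin n) (Fin n) ℝ) (hQ : Qᵀ * Q = 1)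
    (hQX : ∀ (i : Fin n) (j : Fin p), Q i (Fin.castLE hpn j) = X i j)
    (G : Matrix (Fin n) (Fin p) ℝ)
    (hG : ∀ (i : Fin n) (j : Fin p),
      G i j = fderiv ℝ F X (Matrix.single i j (1 : ℝ))) :
    (∑ i : Fin p, ∑ j : Fin p,
        if i < j then riemannianHessianQF F X G (stiefelBasis₁ hpn Q i j) else 0)
      + (∑ i : Fin n, ∑ j : Fin p,
        if p ≤ (i : ℕ) then riemannianHessianQF F X G (stiefelBasis₂ Q i j) else 0)
    = (∑ i : Fin n, ∑ j : Fin p,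
          iteratedFDeriv ℝ 2 F X
            ![Matrix.single i j (1 : ℝ), Matrix.single i j (1 : ℝ)])
      - (∑ i : Fin n, ∑ u : Fin n, ∑ j : Fin p, ∑ v : Fin p,
          X i v * X u j * iteratedFDeriv ℝ 2 F X
            ![Matrix.single i j (1 : ℝ), Matrix.single u v (1 : ℝ)])
      - ((n : ℝ) - 1) * ∑ i : Fin n, ∑ j : Fin p,
          X i j * fderiv ℝ F X (Matrix.single i j (1 : ℝ)) :=
  laplace_beltrami_extrinsic_general n p hpn F X hX Q hQ hQX G hG
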